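/- arXiv:1811.03756 — 10 statements merged into one kernel-verified Lean document; each statement's English description precedes it below -/
import Mathlib

section
/- For every real number b > 2, one has 0 ≤ (√(2b)+1)² − (2·n_b + 1) ≤ 2, where n_b := ⌊b⌋ + ⌈√(2b) + (b − ⌊b⌋)⌉ − 1. -/
noncomputable def nb (b : ℝ) : ℤ := ⌊b⌋ + ⌈Real.sqrt (2*b) + Int.fract b⌉ - 1

theorem stmt_0 (b : ℝ) (hb : 2 < b) :
    0 ≤ (Real.sqrt (2*b) + 1)^2 - (2*(nb b : ℝ) + 1) ∧
    (Real.sqrt (2*b) + 1)^2 - (2*(nb b : ℝ) + 1) ≤ 2 := by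
  have h2b : (0:ℝ) ≤ 2*b := by linarith
  have hs : Real.sqrt (2*b)^2 = 2*b := Real.sq_sqrt h2b
  set s := Real.sqrt (2*b) with hsdef
  have hc1 : s + Int.fract b ≤ (⌈s + Int.fract b⌉ : ℝ) := Int.le_ceil _
  have hc2 : ((⌈s + Int.fract b⌉ : ℤ) : ℝ) < s + Int.fract b + 1 := Int.ceil_lt_add_one _
  have hf : (⌊b⌋ : ℝ) + Int.fract b = b := Int.floor_add_fract b
  have hnb : (nb b : ℝ) = (⌊b⌋ : ℝ) + (⌈s + Int.fract b⌉ : ℤ) - 1 := by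
    unfold nb; push_cast; ring
  constructor <;> nlinarith [hs, hc1, hc2, hf, hnb]
end

section
/- For every real number b > 2, one has 2·n_b + 1 ≤ RF(b) ≤ (√(2b)+1)², where n_b := ⌊b⌋ + ⌈√(2b) + (b − ⌊b⌋)⌉ − 1 and RF(b) := 2b·((2·n_b + 1)/(n_b + b))². -/
noncomputable def RF (b : ℝ) : ℝ := 2*b*((2*(nb b : ℝ) + 1)/((nb b : ℝ) + b))^2

theorem stmt_1 (b : ℝ) (hb : 2 < b) :
    2*(nb b : ℝ) + 1 ≤ RF b ∧ RF b ≤ (Real.sqrt (2*b) + 1)^2 := by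
  set s := Real.sqrt (2*b) with hs
  set n : ℝ := (nb b : ℝ) with hn
  have hb0 : (0:ℝ) ≤ 2*b := by linarith
  have hs2 : s^2 = 2*b := Real.sq_sqrt hb0
  have hsgt : 2 < s := by
    have h4 : Real.sqrt 4 = 2 := by
      rw [show (4:ℝ) = 2^2 by norm_num, Real.sqrt_sq (by norm_num)]
    have := Real.sqrt_lt_sqrt (by norm_num : (0:ℝ) ≤ 4) (by linarith : (4:ℝ) < 2*b)
    rw [h4] at this
    exact this
  have hcast : n = (⌊b⌋ : ℝ) + (⌈s + Int.fract b⌉ : ℝ) - 1 := by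
    rw [hn, nb]
    push_cast
    ring
  have hfl : (⌊b⌋ : ℝ) = b - Int.fract b := by
    rw [Int.self_sub_fract]
  have hceil_le : s + Int.fract b ≤ (⌈s + Int.fract b⌉ : ℝ) := Int.le_ceil _
  have hceil_lt : (⌈s + Int.fract b⌉ : ℝ) < s + Int.fract b + 1 := Int.ceil_lt_add_one _
  have hnl : b + s - 1 ≤ n := by rw [hcast, hfl]; linarith
  have hnu : n < b + s := by rw [hcast, hfl]; linarith
  have hnb_pos : 0 < n + b := by linarith
  have h2n1 : 0 < 2*n + 1 := by linarith
  have hRF : RF b = 2*b*(2*n+1)^2 / (n+b)^2 := by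
    rw [RF, ← hn, div_pow]; ring
  constructor
  · rw [hRF, le_div_iff₀ (by positivity)]
    -- (n-b)^2 ≤ 2b since s-1 ≤ n-b < s and s > 2
    nlinarith [sq_nonneg (n - b - s), mul_pos h2n1 (sub_pos.mpr hnu), sq_nonneg (n+b)]
  · rw [hRF, div_le_iff₀ (by positivity)]
    -- s(2n+1) ≤ (s+1)(n+b), square both sides
    have key : s*(2*n+1) ≤ (s+1)*(n+b) := by
      nlinarith [mul_nonneg (by linarith : (0:ℝ) ≤ s - 1) (by linarith : (0:ℝ) ≤ b + s - n)]
    nlinarith [mul_pos (by positivity : (0:ℝ) < s*(2*n+1)) hnb_pos,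
      mul_le_mul key key (by positivity) (by positivity)]
end

section
/- If b > 2 is real and a is a real number with 2·n_b + 1 ≤ a ≤ RF(b), then (b+1)·√(a/(2b)) − 3 > 1, where n_b := ⌊b⌋ + ⌈√(2b) + (b − ⌊b⌋)⌉ − 1 and RF(b) := 2b·((2·n_b + 1)/(n_b + b))². -/
theorem stmt_3 (b a : ℝ) (hb : 2 < b)
    (h1 : 2*(nb b : ℝ) + 1 ≤ a) (h2 : a ≤ RF b) :
    (b + 1) * Real.sqrt (a/(2*b)) - 3 > 1 := by
  have hb0 : (0:ℝ) < b := by linarith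
  have hn : (4:ℤ) ≤ nb b := by
    have hf : (2:ℤ) ≤ ⌊b⌋ := by
      rw [Int.le_floor]; exact_mod_cast hb.le
    have hc : (2:ℤ) < ⌈Real.sqrt (2*b) + Int.fract b⌉ := by
      rw [Int.lt_ceil]
      have h2s : (2:ℝ) < Real.sqrt (2*b) := by
        have h4 : Real.sqrt 4 = 2 := by
          rw [show (4:ℝ) = 2^2 by norm_num, Real.sqrt_sq (by norm_num)]
        have := Real.sqrt_lt_sqrt (by norm_num : (0:ℝ) ≤ 4) (by linarith : (4:ℝ) < 2*b)
        linarith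
      have := Int.fract_nonneg b
      push_cast
      linarith
    unfold nb; omega
  have ha9 : (9:ℝ) ≤ a := by
    have : (4:ℝ) ≤ (nb b : ℝ) := by exact_mod_cast hn
    linarith
  have hb1 : (0:ℝ) < b + 1 := by linarith
  have hkey : 4 / (b+1) < Real.sqrt (a/(2*b)) := by
    rw [Real.lt_sqrt (by positivity)]
    rw [div_pow, div_lt_div_iff₀ (by positivity) (by positivity)]
    nlinarith [sq_nonneg (b - 1), sq_nonneg (b + 1)]
  have : 4 < (b + 1) * Real.sqrt (a/(2*b)) := by
    have := (div_lt_iff₀' hb1).mp hkey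
    linarith
  linarith
end

section
/- Let b > 2 be real, let n := n_b = ⌊b⌋ + ⌈√(2b) + (b − ⌊b⌋)⌉ − 1, and set λ := (2n+1)/(n+b). Then the minimum of the set { i·λ + j·b·λ : i, j ∈ ℕ, (i+1)(j+1) ≥ 2n+2 } equals 2n+1. (This is the (2n+1)-st ECH capacity of the polydisc P(λ, λb), computed from Hutchings' combinatorial formula c_k(P(c,d)) = min{ cm + dn : m,n ∈ ℕ, (m+1)(n+1) ≥ k+1 }.) -/
theorem stmt_4 (b : ℝ) (hb : 2 < b) :
    IsLeast {x : ℝ | ∃ i j : ℕ, 2*(nb b) + 2 ≤ ((i:ℤ)+1)*((j:ℤ)+1) ∧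
        x = (i : ℝ) * ((2*(nb b : ℝ) + 1)/((nb b : ℝ) + b))
            + (j : ℝ) * (b * ((2*(nb b : ℝ) + 1)/((nb b : ℝ) + b)))}
      (2*(nb b : ℝ) + 1) := by
  have hb0 : (0:ℝ) < b := by linarith
  set s := Real.sqrt (2*b) with hsdef
  have hs0 : 0 ≤ s := Real.sqrt_nonneg _
  have hs2 : s^2 = 2*b := Real.sq_sqrt (by linarith)
  have hsb : s < b := by nlinarith
  have hs2' : 2 < s := by nlinarith
  have hfr : (⌊b⌋ : ℝ) + Int.fract b = b := Int.floor_add_fract b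
  have hnl : b + s - 1 ≤ (nb b : ℝ) := by
    have h1 := Int.le_ceil (s + Int.fract b)
    unfold nb
    push_cast
    linarith
  have hnu : (nb b : ℝ) < b + s := by
    have h1 := Int.ceil_lt_add_one (s + Int.fract b)
    unfold nb
    push_cast
    linarith
  have hn3 : (3:ℝ) < (nb b : ℝ) := by linarith
  have hn1 : (1:ℤ) ≤ nb b := by exact_mod_cast show (1:ℝ) ≤ (nb b:ℝ) by linarith
  have hden : (0:ℝ) < (nb b : ℝ) + b := by linarith
  have hlam : (0:ℝ) < (2*(nb b : ℝ) + 1)/((nb b : ℝ) + b) :=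
    div_pos (by linarith) hden
  have key : ∀ i j : ℕ, 2*(nb b) + 2 ≤ ((i:ℤ)+1)*((j:ℤ)+1) →
      (nb b : ℝ) + b ≤ (i:ℝ) + (j:ℝ)*b := by
    intro i j hij
    match j with
    | 0 =>
      have hi : 2*(nb b) + 1 ≤ (i:ℤ) := by push_cast at hij; omega
      have hi' : 2*(nb b : ℝ) + 1 ≤ (i:ℝ) := by exact_mod_cast hi
      push_cast
      linarith
    | 1 =>
      have hi : nb b ≤ (i:ℤ) := by push_cast at hij; omega
      have hi' : (nb b : ℝ) ≤ (i:ℝ) := by exact_mod_cast hi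
      push_cast
      linarith
    | (j'+2) =>
      by_contra h
      push_neg at h
      set J := (j' : ℝ) with hJdef
      have hJ0 : 0 ≤ J := Nat.cast_nonneg _
      have h' : (i:ℝ) + (J+1)*b < (nb b : ℝ) := by
        push_cast at h
        nlinarith
      set m := ⌊(J+1)*b⌋ with hmdef
      have hml : (m:ℝ) ≤ (J+1)*b := Int.floor_le _
      have hmu : (J+1)*b < (m:ℝ) + 1 := Int.lt_floor_add_one _
      have h1 : (i:ℤ) + m < nb b := by
        have : ((i:ℤ) + m : ℝ) < (nb b : ℝ) := by push_cast; linarith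
        exact_mod_cast this
      have hi1 : (i:ℤ) + 1 ≤ nb b - m := by omega
      have hprod : ((i:ℤ)+1)*((j':ℤ)+3) ≤ (nb b - m)*((j':ℤ)+3) :=
        mul_le_mul_of_nonneg_right hi1 (by positivity)
      have hn2b : (nb b : ℝ) + 1 < 3*b := by linarith
      have hreal : ((nb b : ℝ) - (m:ℝ))*(J+3) < 2*(nb b : ℝ) + 2 := by
        have h3 : (nb b : ℝ) - (m:ℝ) < (nb b : ℝ) + 1 - (J+1)*b := by linarith
        have h4 : ((nb b : ℝ) - (m:ℝ))*(J+3) < ((nb b : ℝ) + 1 - (J+1)*b)*(J+3) :=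
          mul_lt_mul_of_pos_right h3 (by linarith)
        nlinarith [mul_nonneg hJ0 (show (0:ℝ) ≤ 3*b - ((nb b:ℝ)+1) by linarith),
          mul_nonneg (mul_nonneg hJ0 hJ0) hb0.le, mul_nonneg hJ0 hb0.le]
      have hint : (nb b - m)*((j':ℤ)+3) < 2*(nb b) + 2 := by
        have : ((nb b - m)*((j':ℤ)+3) : ℝ) < 2*(nb b : ℝ) + 2 := by push_cast; linarith [hreal]
        exact_mod_cast this
      push_cast at hij
      have hexp : ((i:ℤ)+1)*((j':ℤ)+2+1) = ((i:ℤ)+1)*((j':ℤ)+3) := by ring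
      rw [hexp] at hij
      omega
  constructor
  · refine ⟨(nb b).toNat, 1, ?_, ?_⟩
    · have ht : ((nb b).toNat : ℤ) = nb b := Int.toNat_of_nonneg (by omega)
      rw [ht]; ring_nf; omega
    · have ht0 : ((nb b).toNat : ℤ) = nb b := Int.toNat_of_nonneg (by omega)
      have ht : (((nb b).toNat : ℕ) : ℝ) = (nb b : ℝ) := by exact_mod_cast ht0
      rw [ht]
      field_simp
      ring
  · rintro x ⟨i, j, hij, rfl⟩
    have hk := key i j hij
    have heq : 2*(nb b : ℝ) + 1 = ((nb b : ℝ) + b) * ((2*(nb b : ℝ) + 1)/((nb b : ℝ) + b)) := by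
      field_simp
    have this1 : (i : ℝ) * ((2*(nb b : ℝ) + 1)/((nb b : ℝ) + b))
            + (j : ℝ) * (b * ((2*(nb b : ℝ) + 1)/((nb b : ℝ) + b)))
         = ((i:ℝ) + (j:ℝ)*b) * ((2*(nb b : ℝ) + 1)/((nb b : ℝ) + b)) := by ring
    rw [this1]
    have hmul := mul_le_mul_of_nonneg_right hk hlam.le
    linarith
end

section
/- Let b > 2 be real and set m(a) := (b + n_b)·√(a/(2b)) − (2·n_b + 1), where n_b := ⌊b⌋ + ⌈√(2b) + (b − ⌊b⌋)⌉ − 1 and RF(b) := 2b·((2·n_b + 1)/(n_b + b))². Then m(RF(b)) = 0, and for every real a with RF(b) ≤ a ≤ (√(2b)+1)² one has m(a) < 1. -/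
theorem stmt_7 (b : ℝ) (hb : 2 < b) :
    (b + (nb b : ℝ)) * Real.sqrt (RF b/(2*b)) - (2*(nb b : ℝ) + 1) = 0 ∧
    ∀ a : ℝ, RF b ≤ a → a ≤ (Real.sqrt (2*b) + 1)^2 →
      (b + (nb b : ℝ)) * Real.sqrt (a/(2*b)) - (2*(nb b : ℝ) + 1) < 1 := by
  set s := Real.sqrt (2*b) with hs
  set n : ℝ := (nb b : ℝ) with hn
  have hb0 : (0:ℝ) < 2*b := by linarith
  have hs2 : s^2 = 2*b := Real.sq_sqrt hb0.le
  have hs_pos : 0 < s := Real.sqrt_pos.mpr hb0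
  have hs_gt : 2 < s := by
    nlinarith [hs2, hs_pos]
  have hcast : n = (⌊b⌋ : ℝ) + (⌈s + Int.fract b⌉ : ℝ) - 1 := by
    rw [hn, nb]; push_cast; ring
  have hfl : (⌊b⌋ : ℝ) + Int.fract b = b := Int.floor_add_fract b
  have hn_lb : b + s - 1 ≤ n := by
    have h1 : s + Int.fract b ≤ (⌈s + Int.fract b⌉ : ℝ) := Int.le_ceil _
    rw [hcast]; linarith
  have hn_ub : n < b + s := by
    have h1 : (⌈s + Int.fract b⌉ : ℝ) < s + Int.fract b + 1 := Int.ceil_lt_add_one _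
    rw [hcast]; linarith
  have hnb_pos : 0 < n + b := by linarith
  have h2n : 0 < 2*n + 1 := by linarith
  constructor
  · have : RF b / (2*b) = ((2*n + 1)/(n + b))^2 := by
      rw [RF, ← hn]
      field_simp
    rw [this, Real.sqrt_sq (by positivity)]
    field_simp
    ring
  · intro a _ ha2
    have hsq : Real.sqrt (a/(2*b)) ≤ (s+1)/s := by
      have h1 : a/(2*b) ≤ ((s+1)/s)^2 := by
        rw [div_pow, hs2]
        gcongr
      calc Real.sqrt (a/(2*b)) ≤ Real.sqrt (((s+1)/s)^2) := Real.sqrt_le_sqrt h1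
        _ = (s+1)/s := Real.sqrt_sq (by positivity)
    have h3 : (b + n) * Real.sqrt (a/(2*b)) ≤ (b + n) * ((s+1)/s) := by
      apply mul_le_mul_of_nonneg_left hsq (by linarith)
    have h4 : (b + n) * ((s+1)/s) < 2*n + 2 := by
      have he : (b + n) * ((s+1)/s) = (b + n) * (s+1) / s := by ring
      rw [he, div_lt_iff₀ hs_pos]
      nlinarith [hn_lb, hn_ub, hs2, hs_gt]
    linarith
end

section
/- Let b > 2 be real and let a be a real number with RF(b) ≤ a ≤ (√(2b)+1)². Then (b + n_b)·√(a/(2b)) − (2·n_b + 1) ≤ a − 2·n_b − 1, where n_b := ⌊b⌋ + ⌈√(2b) + (b − ⌊b⌋)⌉ − 1 and RF(b) := 2b·((2·n_b + 1)/(n_b + b))². -/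
theorem stmt_9 (b a : ℝ) (hb : 2 < b)
    (h1 : RF b ≤ a) (h2 : a ≤ (Real.sqrt (2*b) + 1)^2) :
    (b + (nb b : ℝ)) * Real.sqrt (a/(2*b)) - (2*(nb b : ℝ) + 1) ≤
      a - 2*(nb b : ℝ) - 1 := by
  have h2b : (0:ℝ) < 2*b := by linarith
  set n : ℝ := (nb b : ℝ) with hn
  set s := Real.sqrt (2*b) with hsdef
  have hs2 : s^2 = 2*b := Real.sq_sqrt h2b.le
  have hs : 2 < s := by
    have h4 : Real.sqrt 4 < s := Real.sqrt_lt_sqrt (by norm_num) (by linarith)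
    have : Real.sqrt 4 = 2 := by
      rw [show (4:ℝ) = 2^2 by norm_num, Real.sqrt_sq (by norm_num)]
    linarith
  have hceil₁ : s + Int.fract b ≤ (⌈s + Int.fract b⌉ : ℝ) := Int.le_ceil _
  have hceil₂ : (⌈s + Int.fract b⌉ : ℝ) < s + Int.fract b + 1 := Int.ceil_lt_add_one _
  have hfr : Int.fract b = b - ⌊b⌋ := rfl
  have hneq : n = (⌊b⌋ : ℝ) + (⌈s + Int.fract b⌉ : ℝ) - 1 := by
    rw [hn]; unfold nb; push_cast; rw [← hsdef]
  have hlb : b + s - 1 ≤ n := by rw [hneq]; linarith [hceil₁, hfr]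
  have hub : n ≤ b + s := by rw [hneq]; linarith [hceil₂, hfr]
  have hnpos : 0 < n + b := by linarith
  have h2n1 : (0:ℝ) < 2*n + 1 := by linarith
  have hkey : (n+b)^2 ≤ 2*b*(2*n+1) := by
    nlinarith [mul_nonneg (by linarith : (0:ℝ) ≤ s - (n - b)) (by linarith : (0:ℝ) ≤ s + (n - b))]
  have hRFpos : 0 < RF b := by
    rw [RF, ← hn]
    positivity
  have ha : 0 < a := lt_of_lt_of_le hRFpos h1
  set t := Real.sqrt (a/(2*b)) with htdef
  have ht2 : t^2 = a/(2*b) := Real.sq_sqrt (by positivity)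
  have hat : a = 2*b*t^2 := by rw [ht2]; field_simp
  have hq : (2*n+1)/(n+b) ≤ t := by
    have hq2 : ((2*n+1)/(n+b))^2 ≤ a/(2*b) := by
      have hrf : ((2*n+1)/(n+b))^2 = RF b / (2*b) := by
        rw [RF, ← hn]; field_simp
      rw [hrf]; gcongr
    calc (2*n+1)/(n+b) = Real.sqrt (((2*n+1)/(n+b))^2) := by
          rw [Real.sqrt_sq (by positivity)]
      _ ≤ t := Real.sqrt_le_sqrt hq2
  have htpos : 0 < t := lt_of_lt_of_le (by positivity) hq
  have ht' : 2*n + 1 ≤ t*(n+b) := by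
    rw [div_le_iff₀ hnpos] at hq; linarith
  have h2bt : n + b ≤ 2*b*t := by nlinarith [hkey, ht', hnpos]
  nlinarith [mul_le_mul_of_nonneg_left h2bt htpos.le]
end

section
/- For every real number b ≥ 2, one has (b + n_b)² < 4b·(2·n_b + 1), where n_b := ⌊b⌋ + ⌈√(2b) + (b − ⌊b⌋)⌉ − 1; equivalently, b² − 6b·n_b − 4b + n_b² < 0. -/
theorem stmt_10 (b : ℝ) (hb : 2 ≤ b) :
    (b + (nb b : ℝ))^2 < 4*b*(2*(nb b : ℝ) + 1) ∧
    b^2 - 6*b*(nb b : ℝ) - 4*b + (nb b : ℝ)^2 < 0 := by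
  set s := Real.sqrt (2*b) with hsdef
  have hs2 : s^2 = 2*b := Real.sq_sqrt (by linarith)
  have hs0 : 0 ≤ s := Real.sqrt_nonneg _
  have hceil1 : s + Int.fract b ≤ (⌈s + Int.fract b⌉ : ℝ) := Int.le_ceil _
  have hceil2 : (⌈s + Int.fract b⌉ : ℝ) < s + Int.fract b + 1 := Int.ceil_lt_add_one _
  have hfract : (⌊b⌋ : ℝ) + Int.fract b = b := by
    rw [Int.fract]; ring
  have hn : (nb b : ℝ) = (⌊b⌋ : ℝ) + (⌈s + Int.fract b⌉ : ℝ) - 1 := by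
    simp [nb, hsdef]
  have hlow : b + s - 1 ≤ (nb b : ℝ) := by rw [hn]; linarith
  have hhigh : (nb b : ℝ) < b + s := by rw [hn]; linarith
  set n := (nb b : ℝ)
  have key : (b + n)^2 < 4*b*(2*n + 1) := by
    nlinarith [mul_nonneg (sub_nonneg.2 hlow) (le_of_lt (sub_pos.2 hhigh)),
      sq_nonneg (n - b - s + 1), sq_nonneg s, mul_nonneg hs0 (by linarith : (0:ℝ) ≤ b)]
  exact ⟨key, by nlinarith [key]⟩
end

section
/- Let b > 2 be real and let a be a real number with RF(b) ≤ a ≤ (√(2b)+1)². Then (b + n_b)·√(a/(2b)) − (2·n_b + 1) − 2·(√(a/(2b)) − 1) + 1 > 0, where n_b := ⌊b⌋ + ⌈√(2b) + (b − ⌊b⌋)⌉ − 1 and RF(b) := 2b·((2·n_b + 1)/(n_b + b))². -/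
theorem stmt_11 (b a : ℝ) (hb : 2 < b)
    (h1 : RF b ≤ a) (h2 : a ≤ (Real.sqrt (2*b) + 1)^2) :
    (b + (nb b : ℝ)) * Real.sqrt (a/(2*b)) - (2*(nb b : ℝ) + 1)
      - 2*(Real.sqrt (a/(2*b)) - 1) + 1 > 0 := by
  set n : ℝ := (nb b : ℝ) with hn
  have hb0 : (0:ℝ) < 2*b := by linarith
  have hs2 : Real.sqrt (2*b) ^ 2 = 2*b := Real.sq_sqrt hb0.le
  have hsnn : 0 ≤ Real.sqrt (2*b) := Real.sqrt_nonneg _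
  have hs_gt : 2 < Real.sqrt (2*b) := by nlinarith [hs2, hsnn]
  have hfr : Int.fract b = b - (⌊b⌋ : ℝ) := rfl
  have hceil1 : (Real.sqrt (2*b) + Int.fract b : ℝ)
      ≤ ((⌈Real.sqrt (2*b) + Int.fract b⌉ : ℤ) : ℝ) := Int.le_ceil _
  have hceil2 : ((⌈Real.sqrt (2*b) + Int.fract b⌉ : ℤ) : ℝ)
      < Real.sqrt (2*b) + Int.fract b + 1 := Int.ceil_lt_add_one _
  have hnval : n = (⌊b⌋ : ℝ) + ((⌈Real.sqrt (2*b) + Int.fract b⌉ : ℤ) : ℝ) - 1 := by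
    rw [hn]; unfold nb; push_cast; ring
  have hn_lb : b + Real.sqrt (2*b) - 1 ≤ n := by
    rw [hnval]; linarith [hceil1, hfr]
  have hn_ub : n < b + Real.sqrt (2*b) := by
    rw [hnval]; linarith [hceil2, hfr]
  have hn3 : 3 < n := by linarith
  have hnbpos : (0:ℝ) < n + b := by linarith
  set q : ℝ := (2*n+1)/(n+b) with hqdef
  have hqpos : 0 < q := by positivity
  have hq2 : RF b / (2*b) = q^2 := by
    rw [RF, hqdef, ← hn]; field_simp
  have hsle : Real.sqrt (RF b / (2*b)) ≤ Real.sqrt (a / (2*b)) := by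
    apply Real.sqrt_le_sqrt; gcongr
  have hqs : Real.sqrt (RF b / (2*b)) = q := by
    rw [hq2, Real.sqrt_sq hqpos.le]
  have hql : q ≤ Real.sqrt (a/(2*b)) := by rw [← hqs]; exact hsle
  have hsub : Real.sqrt (2*b) ≤ 2*b - 2 := by
    nlinarith [hs2, hsnn, sq_nonneg (Real.sqrt (2*b) - (2*b-2))]
  have hkey : 2*(n-1) < (b+n-2)*q := by
    rw [hqdef, mul_div_assoc', lt_div_iff₀ hnbpos]
    nlinarith [hn_ub, hsub]
  have hbn2 : (0:ℝ) < b+n-2 := by linarith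
  have hmul : (b+n-2)*q ≤ (b+n-2)*Real.sqrt (a/(2*b)) :=
    mul_le_mul_of_nonneg_left hql hbn2.le
  nlinarith [hkey, hmul]
end

section
/- Let n ≥ 1 be an integer. There do not exist nonnegative integers d, e, m with m ≥ 1 such that d + e = 4m, d·e = 4m² − m, and n·(n+1)·(8m − 1)² > 4·(n·d + (n+1)·e)². -/
lemma aux_stmt13 (s u : ℤ) (hs : 1 ≤ s) (hu : 0 ≤ u) :
    (s+u)^2 + (s+u) ≤ 4*s^2*(2*u+1)^2 := by
  nlinarith [mul_nonneg (mul_nonneg hu hu) (by nlinarith : (0:ℤ) ≤ s^2-1),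
    mul_nonneg hu (by nlinarith : (0:ℤ) ≤ s*s - s),
    mul_nonneg hu (by nlinarith : (0:ℤ) ≤ s*u), sq_nonneg s,
    mul_nonneg (by linarith : (0:ℤ) ≤ s-1) (by linarith : (0:ℤ) ≤ s)]

theorem stmt_13 (n : ℤ) (hn : 1 ≤ n) :
    ¬ ∃ d e m : ℤ, 0 ≤ d ∧ 0 ≤ e ∧ 1 ≤ m ∧
      d + e = 4*m ∧ d*e = 4*m^2 - m ∧
      n*(n+1)*(8*m - 1)^2 > 4*(n*d + (n+1)*e)^2 := by
  rintro ⟨d, e, m, hd, he, hm, h1, h2, h3⟩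
  have hd' : d = 4*m - e := by linarith
  subst hd'
  obtain ⟨t, ht⟩ : ∃ t : ℤ, e = 2*m + t := ⟨e - 2*m, by ring⟩
  subst ht
  have hm' : m = t^2 := by nlinarith [h2]
  subst hm'
  -- now h3 : n*(n+1)*(8*t^2-1)^2 > 4*(n*(4*t^2-(2*t^2+t)) + (n+1)*(2*t^2+t))^2
  have key : 4*(n*(4*t^2 - (2*t^2 + t)) + (n+1)*(2*t^2 + t))^2
      - n*(n+1)*(8*t^2 - 1)^2 = 4*t^2*(2*t+2*n+1)^2 - n*(n+1) := by ring
  have hlt : 4*t^2*(2*t+2*n+1)^2 < n^2 + n := by nlinarith [key]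
  rcases le_or_gt 1 t with h | h
  · nlinarith [mul_nonneg (mul_nonneg (by positivity : (0:ℤ) ≤ 4*t^2)
      (by linarith : (0:ℤ) ≤ 2*t+2*n+1 - 1)) (by linarith : (0:ℤ) ≤ 2*t+2*n+1),
      sq_nonneg (2*t+2*n+1), sq_nonneg t]
  · have ht1 : t ≤ -1 := by nlinarith [sq_nonneg t]
    rcases le_or_gt (n + 1) (-t) with hc | hc
    · -- k = -(2t+2n+1) ≥ 1, t^2 ≥ (n+1)^2
      have hk : 1 ≤ -(2*t+2*n+1) := by linarith
      have hts : (n+1)^2 ≤ t^2 := by nlinarith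
      have hk2 : 1 ≤ (2*t+2*n+1)^2 := by nlinarith
      nlinarith [mul_nonneg (by positivity : (0:ℤ) ≤ 4*t^2)
        (by linarith : (0:ℤ) ≤ (2*t+2*n+1)^2 - 1)]
    · -- s = -t ∈ [1, n], u = n + t ≥ 0
      have := aux_stmt13 (-t) (n + t) (by linarith) (by linarith)
      nlinarith [this]
end

section
/- Define the Cremona transformation on vectors (d; m₁, …, m₉) ∈ ℤ¹⁰ by (d; m₁, …, m₉) ↦ (2d − m₁ − m₂ − m₃; d − m₂ − m₃, d − m₁ − m₃, d − m₁ − m₂, m₄, …, m₉). For every integer n ≥ 2, there is a finite sequence of operations, each of which is either a Cremona transformation or a permutation of the nine tail entries (m₁, …, m₉), transforming the vector (3n² + 3n; n² + 2n, n² − 1, n² + n, n² + n, n² + n, n² + n, n² + n, n² + n, n² + n) into the vector (0; −1, 0, 0, 0, 0, 0, 0, 0, 0). -/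
/-- The Cremona transformation on vectors `(d; m₁, …, m₉)`. -/
def cremona (v : ℤ × (Fin 9 → ℤ)) : ℤ × (Fin 9 → ℤ) :=
  (2*v.1 - v.2 0 - v.2 1 - v.2 2,
   ![v.1 - v.2 1 - v.2 2, v.1 - v.2 0 - v.2 2, v.1 - v.2 0 - v.2 1,
     v.2 3, v.2 4, v.2 5, v.2 6, v.2 7, v.2 8])

/-- One step: either a Cremona transformation or a permutation of the nine tail entries. -/
def cremonaStep (v w : ℤ × (Fin 9 → ℤ)) : Prop :=
  w = cremona v ∨ ∃ σ : Equiv.Perm (Fin 9), w = (v.1, v.2 ∘ σ)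

lemma mkeq {a c : ℤ} {b d : Fin 9 → ℤ} (h1 : a = c) (h2 : b = d) :
    (a, b) = (c, d) := by rw [h1, h2]

lemma vec9_eq {a0 a1 a2 a3 a4 a5 a6 a7 a8 b0 b1 b2 b3 b4 b5 b6 b7 b8 : ℤ}
    (h0 : a0 = b0) (h1 : a1 = b1) (h2 : a2 = b2) (h3 : a3 = b3) (h4 : a4 = b4)
    (h5 : a5 = b5) (h6 : a6 = b6) (h7 : a7 = b7) (h8 : a8 = b8) :
    (![a0,a1,a2,a3,a4,a5,a6,a7,a8] : Fin 9 → ℤ) = ![b0,b1,b2,b3,b4,b5,b6,b7,b8] := by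
  rw [h0, h1, h2, h3, h4, h5, h6, h7, h8]

lemma cremona_apply (d m0 m1 m2 m3 m4 m5 m6 m7 m8 : ℤ) :
    cremona (d, ![m0,m1,m2,m3,m4,m5,m6,m7,m8]) =
    (2*d - m0 - m1 - m2, ![d-m1-m2, d-m0-m2, d-m0-m1, m3,m4,m5,m6,m7,m8]) := rfl

lemma reachWW (n : ℤ) : Relation.ReflTransGen cremonaStep ((3*(n+1)^2 - (n+1) : ℤ), ![(n+1)^2, (n+1)^2, (n+1)^2, (n+1)^2, (n+1)^2, (n+1)^2 - 1, (n+1)^2 - (n+1), (n+1)^2 - (n+1), (n+1)^2 - (n+1)]) ((3*n^2 - n : ℤ), ![n^2, n^2, n^2, n^2, n^2, n^2 - 1, n^2 - n, n^2 - n, n^2 - n]) := by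
  refine Relation.ReflTransGen.head (b := ((3*n^2 + 4*n + 1 : ℤ), ![n^2 + n, n^2 + n, n^2 + n, n^2 + 2*n + 1, n^2 + 2*n + 1, n^2 + 2*n, n^2 + n, n^2 + n, n^2 + n]))
    (Or.inl (by rw [cremona_apply]; exact mkeq (by ring) (vec9_eq (by ring) (by ring) (by ring) (by ring) (by ring) (by ring) (by ring) (by ring) (by ring)))) ?_
  refine Relation.ReflTransGen.head (b := ((3*n^2 + 4*n + 1 : ℤ), ![n^2 + 2*n + 1, n^2 + 2*n + 1, n^2 + 2*n, n^2 + n, n^2 + n, n^2 + n, n^2 + n, n^2 + n, n^2 + n]))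
    (Or.inr ⟨Equiv.ofBijective ![3, 4, 5, 0, 1, 2, 6, 7, 8] (by decide), mkeq rfl (funext fun i => by fin_cases i <;> rfl)⟩) ?_
  refine Relation.ReflTransGen.head (b := ((3*n^2 + 2*n : ℤ), ![n^2, n^2, n^2 - 1, n^2 + n, n^2 + n, n^2 + n, n^2 + n, n^2 + n, n^2 + n]))
    (Or.inl (by rw [cremona_apply]; exact mkeq (by ring) (vec9_eq (by ring) (by ring) (by ring) (by ring) (by ring) (by ring) (by ring) (by ring) (by ring)))) ?_
  refine Relation.ReflTransGen.head (b := ((3*n^2 + 2*n : ℤ), ![n^2 + n, n^2 + n, n^2 + n, n^2, n^2, n^2 - 1, n^2 + n, n^2 + n, n^2 + n]))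
    (Or.inr ⟨Equiv.ofBijective ![3, 4, 5, 0, 1, 2, 6, 7, 8] (by decide), mkeq rfl (funext fun i => by fin_cases i <;> rfl)⟩) ?_
  refine Relation.ReflTransGen.head (b := ((3*n^2 + n : ℤ), ![n^2, n^2, n^2, n^2, n^2, n^2 - 1, n^2 + n, n^2 + n, n^2 + n]))
    (Or.inl (by rw [cremona_apply]; exact mkeq (by ring) (vec9_eq (by ring) (by ring) (by ring) (by ring) (by ring) (by ring) (by ring) (by ring) (by ring)))) ?_
  refine Relation.ReflTransGen.head (b := ((3*n^2 + n : ℤ), ![n^2 + n, n^2 + n, n^2 + n, n^2, n^2, n^2 - 1, n^2, n^2, n^2]))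
    (Or.inr ⟨Equiv.ofBijective ![6, 7, 8, 3, 4, 5, 0, 1, 2] (by decide), mkeq rfl (funext fun i => by fin_cases i <;> rfl)⟩) ?_
  refine Relation.ReflTransGen.head (b := ((3*n^2 - n : ℤ), ![n^2 - n, n^2 - n, n^2 - n, n^2, n^2, n^2 - 1, n^2, n^2, n^2]))
    (Or.inl (by rw [cremona_apply]; exact mkeq (by ring) (vec9_eq (by ring) (by ring) (by ring) (by ring) (by ring) (by ring) (by ring) (by ring) (by ring)))) ?_
  refine Relation.ReflTransGen.head (b := ((3*n^2 - n : ℤ), ![n^2, n^2, n^2, n^2, n^2, n^2 - 1, n^2 - n, n^2 - n, n^2 - n]))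
    (Or.inr ⟨Equiv.ofBijective ![3, 4, 6, 7, 8, 5, 0, 1, 2] (by decide), mkeq rfl (funext fun i => by fin_cases i <;> rfl)⟩) ?_
  exact Relation.ReflTransGen.refl

lemma reachVW (n : ℤ) : Relation.ReflTransGen cremonaStep ((3*n^2 + 3*n : ℤ), ![n^2 + 2*n, n^2 - 1, n^2 + n, n^2 + n, n^2 + n, n^2 + n, n^2 + n, n^2 + n, n^2 + n]) ((3*n^2 - n : ℤ), ![n^2, n^2, n^2, n^2, n^2, n^2 - 1, n^2 - n, n^2 - n, n^2 - n]) := by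
  refine Relation.ReflTransGen.head (b := ((3*n^2 + 3*n : ℤ), ![n^2 + 2*n, n^2 + n, n^2 + n, n^2 - 1, n^2 + n, n^2 + n, n^2 + n, n^2 + n, n^2 + n]))
    (Or.inr ⟨Equiv.ofBijective ![0, 2, 3, 1, 4, 5, 6, 7, 8] (by decide), mkeq rfl (funext fun i => by fin_cases i <;> rfl)⟩) ?_
  refine Relation.ReflTransGen.head (b := ((3*n^2 + 2*n : ℤ), ![n^2 + n, n^2, n^2, n^2 - 1, n^2 + n, n^2 + n, n^2 + n, n^2 + n, n^2 + n]))
    (Or.inl (by rw [cremona_apply]; exact mkeq (by ring) (vec9_eq (by ring) (by ring) (by ring) (by ring) (by ring) (by ring) (by ring) (by ring) (by ring)))) ?_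
  refine Relation.ReflTransGen.head (b := ((3*n^2 + 2*n : ℤ), ![n^2 + n, n^2 + n, n^2 + n, n^2, n^2, n^2 - 1, n^2 + n, n^2 + n, n^2 + n]))
    (Or.inr ⟨Equiv.ofBijective ![0, 4, 5, 1, 2, 3, 6, 7, 8] (by decide), mkeq rfl (funext fun i => by fin_cases i <;> rfl)⟩) ?_
  refine Relation.ReflTransGen.head (b := ((3*n^2 + n : ℤ), ![n^2, n^2, n^2, n^2, n^2, n^2 - 1, n^2 + n, n^2 + n, n^2 + n]))
    (Or.inl (by rw [cremona_apply]; exact mkeq (by ring) (vec9_eq (by ring) (by ring) (by ring) (by ring) (by ring) (by ring) (by ring) (by ring) (by ring)))) ?_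
  refine Relation.ReflTransGen.head (b := ((3*n^2 + n : ℤ), ![n^2 + n, n^2 + n, n^2 + n, n^2, n^2, n^2 - 1, n^2, n^2, n^2]))
    (Or.inr ⟨Equiv.ofBijective ![6, 7, 8, 3, 4, 5, 0, 1, 2] (by decide), mkeq rfl (funext fun i => by fin_cases i <;> rfl)⟩) ?_
  refine Relation.ReflTransGen.head (b := ((3*n^2 - n : ℤ), ![n^2 - n, n^2 - n, n^2 - n, n^2, n^2, n^2 - 1, n^2, n^2, n^2]))
    (Or.inl (by rw [cremona_apply]; exact mkeq (by ring) (vec9_eq (by ring) (by ring) (by ring) (by ring) (by ring) (by ring) (by ring) (by ring) (by ring)))) ?_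
  refine Relation.ReflTransGen.head (b := ((3*n^2 - n : ℤ), ![n^2, n^2, n^2, n^2, n^2, n^2 - 1, n^2 - n, n^2 - n, n^2 - n]))
    (Or.inr ⟨Equiv.ofBijective ![3, 4, 6, 7, 8, 5, 0, 1, 2] (by decide), mkeq rfl (funext fun i => by fin_cases i <;> rfl)⟩) ?_
  exact Relation.ReflTransGen.refl

lemma reachBase : Relation.ReflTransGen cremonaStep ((2 : ℤ), ![1,1,1,1,1,0,0,0,0]) ((0 : ℤ), ![-1,0,0,0,0,0,0,0,0]) := by
  refine Relation.ReflTransGen.head (b := ((1 : ℤ), ![0, 0, 0, 1, 1, 0, 0, 0, 0]))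
    (Or.inl (by rw [cremona_apply]; exact mkeq (by ring) (vec9_eq (by ring) (by ring) (by ring) (by ring) (by ring) (by ring) (by ring) (by ring) (by ring)))) ?_
  refine Relation.ReflTransGen.head (b := ((1 : ℤ), ![1, 1, 0, 0, 0, 0, 0, 0, 0]))
    (Or.inr ⟨Equiv.ofBijective ![3, 4, 5, 0, 1, 2, 6, 7, 8] (by decide), mkeq rfl (funext fun i => by fin_cases i <;> rfl)⟩) ?_
  refine Relation.ReflTransGen.head (b := ((0 : ℤ), ![0, 0, -1, 0, 0, 0, 0, 0, 0]))
    (Or.inl (by rw [cremona_apply]; exact mkeq (by ring) (vec9_eq (by ring) (by ring) (by ring) (by ring) (by ring) (by ring) (by ring) (by ring) (by ring)))) ?_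
  refine Relation.ReflTransGen.head (b := ((0 : ℤ), ![-1, 0, 0, 0, 0, 0, 0, 0, 0]))
    (Or.inr ⟨Equiv.ofBijective ![2, 1, 0, 3, 4, 5, 6, 7, 8] (by decide), mkeq rfl (funext fun i => by fin_cases i <;> rfl)⟩) ?_
  exact Relation.ReflTransGen.refl


lemma reachW (n : ℤ) (hn : 1 ≤ n) :
    Relation.ReflTransGen cremonaStep
      ((3*n^2 - n : ℤ), ![n^2, n^2, n^2, n^2, n^2, n^2 - 1, n^2 - n, n^2 - n, n^2 - n])
      ((0 : ℤ), ![-1, 0, 0, 0, 0, 0, 0, 0, 0]) := by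
  refine Int.le_induction
    (motive := fun k _ => Relation.ReflTransGen cremonaStep
      ((3*k^2 - k : ℤ), ![k^2, k^2, k^2, k^2, k^2, k^2 - 1, k^2 - k, k^2 - k, k^2 - k])
      ((0 : ℤ), ![-1, 0, 0, 0, 0, 0, 0, 0, 0])) ?_ ?_ n hn
  ·
    have h : ((3*(1:ℤ)^2 - 1 : ℤ), ![(1:ℤ)^2, 1^2, 1^2, 1^2, 1^2, 1^2 - 1, 1^2 - 1, 1^2 - 1, 1^2 - 1])
        = ((2 : ℤ), ![1,1,1,1,1,0,0,0,0]) := by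
      exact mkeq (by norm_num) (vec9_eq (by norm_num) (by norm_num) (by norm_num) (by norm_num) (by norm_num) (by norm_num) (by norm_num) (by norm_num) (by norm_num))
    show Relation.ReflTransGen cremonaStep
      ((3*(1:ℤ)^2 - 1 : ℤ), ![(1:ℤ)^2, 1^2, 1^2, 1^2, 1^2, 1^2 - 1, 1^2 - 1, 1^2 - 1, 1^2 - 1])
      ((0 : ℤ), ![-1, 0, 0, 0, 0, 0, 0, 0, 0])
    rw [h]
    exact reachBase
  · intro m _ ih
    exact (reachWW m).trans ih

theorem stmt_16 (n : ℤ) (hn : 2 ≤ n) :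
    Relation.ReflTransGen cremonaStep
      (3*n^2 + 3*n,
        ![n^2 + 2*n, n^2 - 1, n^2 + n, n^2 + n, n^2 + n, n^2 + n, n^2 + n,
          n^2 + n, n^2 + n])
      (0, ![-1, 0, 0, 0, 0, 0, 0, 0, 0]) := by
  exact (reachVW n).trans (reachW n (by omega))
end
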